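/- arXiv:2001.03322 — 6 statements merged into one kernel-verified Lean document; each statement's English description precedes it below -/
import Mathlib

section
/- For fixed y, any two minimizers (x¹, x²) and (x̄¹, x̄²) in X(y) of the augmented Lagrangian L_ρ(·,·;y) satisfy Mx² = Mx̄² and y + ρ(x¹ - x²) = y + ρ(x̄¹ - x̄²); that is, the quantities Mx² and y + ρ(x¹ - x²) are uniquely determined by y. -/
open scoped InnerProductSpace

private lemma midpoint_norm_sq {E : Type*} [NormedAddCommGroup E] [InnerProductSpace ℝ E]
    (a c : E) : ‖(1/2 : ℝ) • (a + c)‖ ^ 2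
      = (1/2) * ‖a‖ ^ 2 + (1/2) * ‖c‖ ^ 2 - (1/4) * ‖a - c‖ ^ 2 := by
  rw [norm_smul]
  have h1 : ‖a + c‖ ^ 2 = ‖a‖ ^ 2 + 2 * ⟪a, c⟫_ℝ + ‖c‖ ^ 2 := norm_add_sq_real a c
  have h2 : ‖a - c‖ ^ 2 = ‖a‖ ^ 2 - 2 * ⟪a, c⟫_ℝ + ‖c‖ ^ 2 := norm_sub_sq_real a c
  have : ‖(1/2 : ℝ)‖ = 1/2 := by norm_num
  rw [this, mul_pow, h2]
  nlinarith [h1]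

set_option maxHeartbeats 1600000 in
/-- For fixed `y`, any two minimizers `(x¹, x²)` and `(x̄¹, x̄²)` of the
augmented Lagrangian `L_ρ(·,·;y)` share the same values of `Mx²` and of
`y + ρ(x¹ - x²)`. -/
theorem minimizers_share_Mx2_and_multiplier
    (n d : ℕ) (ρ : ℝ) (hρ : 0 < ρ)
    (h : EuclideanSpace ℝ (Fin n) → ℝ) (hconv : ConvexOn ℝ Set.univ h)
    (M : Matrix (Fin d) (Fin n) ℝ) (b : EuclideanSpace ℝ (Fin d))
    (y : EuclideanSpace ℝ (Fin n)) :
    let L : EuclideanSpace ℝ (Fin n) → EuclideanSpace ℝ (Fin n) → ℝ := fun x1 x2 =>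
      h x1 + (1 / 2) * ‖Matrix.toEuclideanLin M x2 - b‖ ^ 2 + ⟪y, x1 - x2⟫_ℝ +
        (ρ / 2) * ‖x1 - x2‖ ^ 2
    ∀ x1 x2 x1' x2' : EuclideanSpace ℝ (Fin n),
      (∀ u1 u2, L x1 x2 ≤ L u1 u2) → (∀ u1 u2, L x1' x2' ≤ L u1 u2) →
      Matrix.toEuclideanLin M x2 = Matrix.toEuclideanLin M x2' ∧
        y + ρ • (x1 - x2) = y + ρ • (x1' - x2') := by
  intro L x1 x2 x1' x2' hmin hmin'
  set T := Matrix.toEuclideanLin M with hT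
  set m1 := (1/2 : ℝ) • (x1 + x1') with hm1
  set m2 := (1/2 : ℝ) • (x2 + x2') with hm2
  -- h at midpoint
  have hh : h m1 ≤ (1/2) * h x1 + (1/2) * h x1' := by
    have hm : m1 = (2⁻¹ : ℝ) • x1 + (2⁻¹ : ℝ) • x1' := by rw [hm1]; module
    have := hconv.2 (Set.mem_univ x1) (Set.mem_univ x1')
      (by norm_num : (0:ℝ) ≤ 1/2) (by norm_num : (0:ℝ) ≤ 1/2) (by norm_num)
    rw [hm]
    simpa [smul_eq_mul] using this
  -- quadratic term in x2
  have hq2 : T m2 - b = (1/2 : ℝ) • ((T x2 - b) + (T x2' - b)) := by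
    rw [hm2, map_smul, map_add]
    module
  have hq2' : ‖T m2 - b‖ ^ 2
      = (1/2) * ‖T x2 - b‖ ^ 2 + (1/2) * ‖T x2' - b‖ ^ 2
        - (1/4) * ‖T x2 - T x2'‖ ^ 2 := by
    rw [hq2, midpoint_norm_sq]
    congr 2
    abel_nf
  -- difference term
  have hd : m1 - m2 = (1/2 : ℝ) • ((x1 - x2) + (x1' - x2')) := by
    rw [hm1, hm2]; module
  have hd' : ‖m1 - m2‖ ^ 2
      = (1/2) * ‖x1 - x2‖ ^ 2 + (1/2) * ‖x1' - x2'‖ ^ 2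
        - (1/4) * ‖(x1 - x2) - (x1' - x2')‖ ^ 2 := by
    rw [hd, midpoint_norm_sq]
  -- inner term
  have hi : ⟪y, m1 - m2⟫_ℝ = (1/2) * ⟪y, x1 - x2⟫_ℝ + (1/2) * ⟪y, x1' - x2'⟫_ℝ := by
    rw [hd, inner_smul_right, inner_add_right]; ring
  -- midpoint value bound
  have hL : L m1 m2 ≤ (1/2) * L x1 x2 + (1/2) * L x1' x2'
      - (1/8) * ‖T x2 - T x2'‖ ^ 2
      - (ρ/8) * ‖(x1 - x2) - (x1' - x2')‖ ^ 2 := by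
    simp only [L]
    rw [hq2', hd', hi]
    set a0 := h m1
    set a1 := h x1
    set a2 := h x1'
    set q1 := ‖T x2 - b‖ ^ 2
    set q2 := ‖T x2' - b‖ ^ 2
    set c := ‖T x2 - T x2'‖ ^ 2
    set i1 := ⟪y, x1 - x2⟫_ℝ
    set i2 := ⟪y, x1' - x2'⟫_ℝ
    set n1 := ‖x1 - x2‖ ^ 2
    set n2 := ‖x1' - x2'‖ ^ 2
    set dd := ‖(x1 - x2) - (x1' - x2')‖ ^ 2
    nlinarith [hh]
  clear_value L
  have h1 := hmin m1 m2
  have h2 := hmin' m1 m2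
  have hA : (0:ℝ) ≤ ‖T x2 - T x2'‖ ^ 2 := by positivity
  have hB : (0:ℝ) ≤ ‖(x1 - x2) - (x1' - x2')‖ ^ 2 := by positivity
  have hρB : (0:ℝ) ≤ ρ/8 * ‖(x1 - x2) - (x1' - x2')‖ ^ 2 := by positivity
  have key : (1/8) * ‖T x2 - T x2'‖ ^ 2
      + (ρ/8) * ‖(x1 - x2) - (x1' - x2')‖ ^ 2 ≤ 0 := by linarith
  have hA0 : ‖T x2 - T x2'‖ ^ 2 = 0 := by linarith
  have hBmul : ρ/8 * ‖(x1 - x2) - (x1' - x2')‖ ^ 2 = 0 := le_antisymm (by linarith) hρB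
  have hB0 : ‖(x1 - x2) - (x1' - x2')‖ ^ 2 = 0 := by
    rcases mul_eq_zero.mp hBmul with hc | hc
    · exfalso; have : ρ/8 > 0 := by linarith
      linarith
    · exact hc
  constructor
  · have := norm_eq_zero.mp (pow_eq_zero_iff (n := 2) (by norm_num) |>.mp hA0)
    exact sub_eq_zero.mp this
  · have h5 : (x1 - x2) - (x1' - x2') = 0 :=
      norm_eq_zero.mp (pow_eq_zero_iff (n := 2) (by norm_num) |>.mp hB0)
    have : x1 - x2 = x1' - x2' := sub_eq_zero.mp h5
    rw [this]
end

section
/- Suppose (x¹, x², s, μ, ν) satisfies the KKT conditions w_g‖x¹_{j(g)}‖₂ ≤ s_g, ‖μ_g‖₂ ≤ ν_g, ν_g = λ, and μ_gᵀ x¹_{j(g)} + (s_g/w_g)ν_g = 0 for all g, and (x¹*, x²*, s*, μ*, ν*) satisfies the same. Then for every group g, ⟨w_g μ_g - w_g μ_g*, x¹_{j(g)} - x¹*_{j(g)}⟩ ≤ 0. -/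
open scoped InnerProductSpace

/-- If `(x¹, s, μ, ν)` and `(x¹*, s*, μ*, ν*)` both satisfy the KKT
conditions `w_g‖x¹_{j(g)}‖ ≤ s_g`, `‖μ_g‖ ≤ ν_g`, `ν_g = λ`, and
`μ_gᵀ x¹_{j(g)} + (s_g/w_g)ν_g = 0` for all `g`, then for every group `g`,
`⟨w_g μ_g - w_g μ_g*, x¹_{j(g)} - x¹*_{j(g)}⟩ ≤ 0`. -/
theorem kkt_groupwise_monotonicity
    (k : ℕ) (G : Type) [Fintype G] (lam : ℝ) (hlam : 0 < lam)
    (w : G → ℝ) (hw : ∀ g, 0 < w g)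
    (a astar μ μstar : G → EuclideanSpace ℝ (Fin k))
    (s sstar ν νstar : G → ℝ)
    (h1 : ∀ g, w g * ‖a g‖ ≤ s g) (h2 : ∀ g, ‖μ g‖ ≤ ν g)
    (h3 : ∀ g, ν g = lam)
    (h4 : ∀ g, ⟪μ g, a g⟫_ℝ + (s g / w g) * ν g = 0)
    (h1' : ∀ g, w g * ‖astar g‖ ≤ sstar g) (h2' : ∀ g, ‖μstar g‖ ≤ νstar g)
    (h3' : ∀ g, νstar g = lam)
    (h4' : ∀ g, ⟪μstar g, astar g⟫_ℝ + (sstar g / w g) * νstar g = 0) :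
    ∀ g, ⟪w g • μ g - w g • μstar g, a g - astar g⟫_ℝ ≤ 0 := by
  intro g
  have hwg := hw g
  -- s g / w g ≥ ‖a g‖
  have hs : ‖a g‖ ≤ s g / w g := (le_div_iff₀' hwg).mpr (h1 g)
  have hs' : ‖astar g‖ ≤ sstar g / w g := (le_div_iff₀' hwg).mpr (h1' g)
  have hμ : ‖μ g‖ ≤ lam := (h3 g) ▸ (h2 g)
  have hμ' : ‖μstar g‖ ≤ lam := (h3' g) ▸ (h2' g)
  have e1 : ⟪μ g, a g⟫_ℝ = -((s g / w g) * lam) := by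
    have := h4 g; rw [h3 g] at this; linarith
  have e2 : ⟪μstar g, astar g⟫_ℝ = -((sstar g / w g) * lam) := by
    have := h4' g; rw [h3' g] at this; linarith
  have c1 : ⟪μ g, a g⟫_ℝ ≤ -(lam * ‖a g‖) := by
    rw [e1]
    have := mul_le_mul_of_nonneg_right hs hlam.le
    nlinarith
  have c2 : ⟪μstar g, astar g⟫_ℝ ≤ -(lam * ‖astar g‖) := by
    rw [e2]
    have := mul_le_mul_of_nonneg_right hs' hlam.le
    nlinarith
  have b1 : -⟪μ g, astar g⟫_ℝ ≤ lam * ‖astar g‖ := by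
    have h := abs_real_inner_le_norm (μ g) (astar g)
    have : |⟪μ g, astar g⟫_ℝ| ≤ lam * ‖astar g‖ :=
      h.trans (mul_le_mul_of_nonneg_right hμ (norm_nonneg _))
    have := neg_abs_le (⟪μ g, astar g⟫_ℝ)
    linarith [abs_le.mp ‹|⟪μ g, astar g⟫_ℝ| ≤ lam * ‖astar g‖›]
  have b2 : -⟪μstar g, a g⟫_ℝ ≤ lam * ‖a g‖ := by
    have h := abs_real_inner_le_norm (μstar g) (a g)
    have hh : |⟪μstar g, a g⟫_ℝ| ≤ lam * ‖a g‖ :=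
      h.trans (mul_le_mul_of_nonneg_right hμ' (norm_nonneg _))
    linarith [abs_le.mp hh]
  have key : ⟪μ g - μstar g, a g - astar g⟫_ℝ ≤ 0 := by
    rw [inner_sub_left, inner_sub_right, inner_sub_right]
    linarith
  have : ⟪w g • μ g - w g • μstar g, a g - astar g⟫_ℝ
      = w g * ⟪μ g - μstar g, a g - astar g⟫_ℝ := by
    rw [← smul_sub, real_inner_smul_left]
  rw [this]
  exact mul_nonpos_of_nonneg_of_nonpos hwg.le key
end

section
/- Key inequality for the dual error bound: for any y ∈ ℝⁿ and any dual optimal y* ∈ Y*, with (x¹(y), x²(y)) minimizing the augmented Lagrangian at y and (x¹(y*), x²(y*)) at y*, one has ‖Mx²(y) - Mx²(y*)‖₂² + ρ‖E x(y) - E x(y*)‖₂² ≤ ‖y - y*‖₂ · ‖∇g_ρ(y)‖₂, where E = [I, -I] so that Ex = x¹ - x². -/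
/-!
The smooth part of the augmented Lagrangian `L(·, ·, y)` is quadratic, so along a chord it falls
below linear interpolation by exactly `t(1 - t)·D(a, u)/2`, where
`D(a, u) = ‖A(u₂ - a₂)‖² + ρ‖Eu - Ea‖²` and `Eu = u₁ - u₂`; the group-lasso term is convex.
Letting `t → 0`, at a minimizer `a` of `L(·, ·, y)` every `u` satisfies
`L(u, y) ≥ L(a, y) + D(a, u)/2`. Writing this at `y` against `x(y*)` and at
`y*` against `x(y)` and adding, the Lagrangian values cancel up to `⟪y* - y, Ex(y) - Ex(y*)⟫`;
since `Ex(y*) = 0`, Cauchy–Schwarz finishes.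
-/

open scoped InnerProductSpace
open Set Filter Topology

theorem add_le_of_forall_le_of_smul_add_smul_le {V : Type*} [AddCommGroup V] [Module ℝ V]
    {f : V → ℝ} {a u : V} {c : ℝ} (hmin : ∀ v, f a ≤ f v)
    (hchord : ∀ t ∈ Ioo (0 : ℝ) 1,
      f ((1 - t) • a + t • u) ≤ (1 - t) * f a + t * f u - t * (1 - t) * c) :
    f a + c ≤ f u := by
  have hbound : ∀ t ∈ Ioo (0 : ℝ) 1, (1 - t) * c ≤ f u - f a := by
    intro t ht
    have h := (hmin _).trans (hchord t ht)
    have : t * ((1 - t) * c) ≤ t * (f u - f a) := by linarith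
    exact le_of_mul_le_mul_left this ht.1
  have hlim : Tendsto (fun t : ℝ => (1 - t) * c) (𝓝[>] 0) (𝓝 c) := by
    have : Continuous fun t : ℝ => (1 - t) * c := by fun_prop
    simpa using (this.tendsto 0).mono_left nhdsWithin_le_nhds
  have := le_of_tendsto hlim (eventually_of_mem (Ioo_mem_nhdsGT zero_lt_one) hbound)
  linarith

theorem norm_smul_add_smul_sq {F : Type*} [NormedAddCommGroup F] [InnerProductSpace ℝ F]
    (p q : F) (t : ℝ) :
    ‖(1 - t) • p + t • q‖ ^ 2 = (1 - t) * ‖p‖ ^ 2 + t * ‖q‖ ^ 2 - t * (1 - t) * ‖p - q‖ ^ 2 := by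
  rw [norm_add_sq_real, norm_sub_sq_real, norm_smul, norm_smul, real_inner_smul_left,
    real_inner_smul_right, mul_pow, mul_pow, Real.norm_eq_abs, Real.norm_eq_abs, sq_abs, sq_abs]
  ring

theorem convexOn_sqrt_sum_sq {ι : Type*} [Fintype ι] (s : Finset ι) :
    ConvexOn ℝ univ fun u : EuclideanSpace ℝ ι => √(∑ i ∈ s, u i ^ 2) := by
  let restrict : EuclideanSpace ℝ ι →ₗ[ℝ] EuclideanSpace ℝ s :=
    { toFun := fun u => WithLp.toLp 2 fun i : s => u i
      map_add' := fun _ _ => rfl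
      map_smul' := fun _ _ => rfl }
  have hnorm : ∀ u, ‖restrict u‖ = √(∑ i ∈ s, u i ^ 2) := fun u => by
    simp only [EuclideanSpace.norm_eq, Real.norm_eq_abs, sq_abs, ← Finset.sum_coe_sort s]
    rfl
  simpa [Function.comp_def, hnorm] using (convexOn_norm convex_univ).comp_linearMap restrict

noncomputable def groupLasso {ι G : Type*} [Fintype G] (lam : ℝ) (w : G → ℝ) (j : G → Finset ι)
    (u : EuclideanSpace ℝ ι) : ℝ :=
  lam * ∑ g, w g * √(∑ t ∈ j g, u t ^ 2)

theorem convexOn_groupLasso {ι G : Type*} [Fintype ι] [Fintype G] {lam : ℝ} {w : G → ℝ}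
    (hlam : 0 ≤ lam) (hw : ∀ g, 0 ≤ w g) (j : G → Finset ι) :
    ConvexOn ℝ univ (groupLasso lam w j) := by
  have hsum : ConvexOn ℝ univ fun u : EuclideanSpace ℝ ι => ∑ g, w g * √(∑ t ∈ j g, u t ^ 2) := by
    have : (fun u : EuclideanSpace ℝ ι => ∑ g, w g * √(∑ t ∈ j g, u t ^ 2)) =
        ∑ g, fun u => w g * √(∑ t ∈ j g, u t ^ 2) := by
      ext u
      simp only [Finset.sum_apply]
    rw [this]
    exact Finset.sum_induction _ (ConvexOn ℝ univ) (fun _ _ => ConvexOn.add)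
      (convexOn_const 0 convex_univ) fun g _ => (convexOn_sqrt_sum_sq (j g)).smul (hw g)
  exact hsum.smul hlam

section AugmentedLagrangian

variable {E F : Type*} [NormedAddCommGroup E] [InnerProductSpace ℝ E]
  [NormedAddCommGroup F] [InnerProductSpace ℝ F]

/-- The augmented Lagrangian of `min φ(x¹) + ½‖A x² - b‖²` subject to `x¹ = x²`. -/
noncomputable def augLagrangian (φ : E → ℝ) (A : E →ₗ[ℝ] F) (b : F) (ρ : ℝ) (u₁ u₂ y : E) : ℝ :=
  φ u₁ + (1 / 2) * ‖A u₂ - b‖ ^ 2 + ⟪y, u₁ - u₂⟫_ℝ + (ρ / 2) * ‖u₁ - u₂‖ ^ 2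

variable {φ : E → ℝ} {A : E →ₗ[ℝ] F} {b : F} {ρ : ℝ}

theorem augLagrangian_smul_add_smul_le (hφ : ConvexOn ℝ univ φ) (y a₁ a₂ u₁ u₂ : E) {t : ℝ}
    (ht₀ : 0 ≤ t) (ht₁ : t ≤ 1) :
    augLagrangian φ A b ρ ((1 - t) • a₁ + t • u₁) ((1 - t) • a₂ + t • u₂) y ≤
      (1 - t) * augLagrangian φ A b ρ a₁ a₂ y + t * augLagrangian φ A b ρ u₁ u₂ y -
        t * (1 - t) * ((‖A a₂ - A u₂‖ ^ 2 + ρ * ‖(a₁ - a₂) - (u₁ - u₂)‖ ^ 2) / 2) := by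
  have hφ_chord := hφ.2 (mem_univ a₁) (mem_univ u₁) (sub_nonneg.2 ht₁) ht₀ (sub_add_cancel 1 t)
  have hresidual : A ((1 - t) • a₂ + t • u₂) - b = (1 - t) • (A a₂ - b) + t • (A u₂ - b) := by
    rw [map_add, map_smul, map_smul]
    module
  have hdiff : (1 - t) • a₁ + t • u₁ - ((1 - t) • a₂ + t • u₂) =
      (1 - t) • (a₁ - a₂) + t • (u₁ - u₂) := by
    module
  simp only [smul_eq_mul] at hφ_chord
  unfold augLagrangian
  rw [hresidual, hdiff, norm_smul_add_smul_sq, norm_smul_add_smul_sq, inner_add_right,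
    real_inner_smul_right, real_inner_smul_right, sub_sub_sub_cancel_right]
  linarith

theorem augLagrangian_add_le_of_isMin (hφ : ConvexOn ℝ univ φ) {y a₁ a₂ : E}
    (hmin : ∀ v₁ v₂, augLagrangian φ A b ρ a₁ a₂ y ≤ augLagrangian φ A b ρ v₁ v₂ y) (u₁ u₂ : E) :
    augLagrangian φ A b ρ a₁ a₂ y + (‖A a₂ - A u₂‖ ^ 2 + ρ * ‖(a₁ - a₂) - (u₁ - u₂)‖ ^ 2) / 2 ≤
      augLagrangian φ A b ρ u₁ u₂ y :=
  add_le_of_forall_le_of_smul_add_smul_le (f := fun v : E × E => augLagrangian φ A b ρ v.1 v.2 y)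
    (a := (a₁, a₂)) (u := (u₁, u₂)) (fun v => hmin v.1 v.2) fun _ ht =>
      augLagrangian_smul_add_smul_le hφ y a₁ a₂ u₁ u₂ ht.1.le ht.2.le

/-- Monotonicity of `y ↦ x¹(y) - x²(y)`, the gradient of the dual function. -/
theorem norm_sq_add_le_inner_of_isMin_augLagrangian (hφ : ConvexOn ℝ univ φ)
    {y y' a₁ a₂ a₁' a₂' : E}
    (hmin : ∀ v₁ v₂, augLagrangian φ A b ρ a₁ a₂ y ≤ augLagrangian φ A b ρ v₁ v₂ y)
    (hmin' : ∀ v₁ v₂, augLagrangian φ A b ρ a₁' a₂' y' ≤ augLagrangian φ A b ρ v₁ v₂ y') :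
    ‖A a₂ - A a₂'‖ ^ 2 + ρ * ‖(a₁ - a₂) - (a₁' - a₂')‖ ^ 2 ≤ ⟪y' - y, (a₁ - a₂) - (a₁' - a₂')⟫_ℝ := by
  have h := augLagrangian_add_le_of_isMin hφ hmin a₁' a₂'
  have h' := augLagrangian_add_le_of_isMin hφ hmin' a₁ a₂
  rw [norm_sub_rev (A a₂'), norm_sub_rev (a₁' - a₂')] at h'
  unfold augLagrangian at h h'
  simp only [inner_sub_left, inner_sub_right] at h h' ⊢
  linarith

end AugmentedLagrangian

theorem dual_error_bound_key_inequality_general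
    (n d : ℕ) (G : Type) [Fintype G] (lam ρ : ℝ) (hlam : 0 < lam)
    (w : G → ℝ) (hw : ∀ g, 0 < w g) (j : G → Finset (Fin n))
    (M : Matrix (Fin d) (Fin n) ℝ) (b : EuclideanSpace ℝ (Fin d))
    (x1 x2 : EuclideanSpace ℝ (Fin n) → EuclideanSpace ℝ (Fin n)) :
    let L : EuclideanSpace ℝ (Fin n) → EuclideanSpace ℝ (Fin n) →
        EuclideanSpace ℝ (Fin n) → ℝ := fun u1 u2 y =>
      lam * ∑ g, w g * Real.sqrt (∑ t ∈ j g, u1 t ^ 2) +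
        (1 / 2) * ‖Matrix.toEuclideanLin M u2 - b‖ ^ 2 + ⟪y, u1 - u2⟫_ℝ +
        (ρ / 2) * ‖u1 - u2‖ ^ 2
    let gdual : EuclideanSpace ℝ (Fin n) → ℝ := fun y => L (x1 y) (x2 y) y
    (∀ y u1 u2, L (x1 y) (x2 y) y ≤ L u1 u2 y) →
      ∀ y ystar, (∀ y', gdual y' ≤ gdual ystar) → x1 ystar = x2 ystar →
        ‖Matrix.toEuclideanLin M (x2 y) - Matrix.toEuclideanLin M (x2 ystar)‖ ^ 2 +
            ρ * ‖(x1 y - x2 y) - (x1 ystar - x2 ystar)‖ ^ 2 ≤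
          ‖y - ystar‖ * ‖x1 y - x2 y‖ := by
  intro L _ hmin y ystar _ hfeasible
  have hconvex := convexOn_groupLasso hlam.le (fun g => (hw g).le) j
  have hmono := norm_sq_add_le_inner_of_isMin_augLagrangian (A := Matrix.toEuclideanLin M)
    (b := b) (ρ := ρ) hconvex (hmin y) (hmin ystar)
  rw [hfeasible, sub_self, sub_zero] at hmono ⊢
  calc _ ≤ ⟪ystar - y, x1 y - x2 y⟫_ℝ := hmono
    _ ≤ ‖ystar - y‖ * ‖x1 y - x2 y‖ := real_inner_le_norm _ _
    _ = ‖y - ystar‖ * ‖x1 y - x2 y‖ := by rw [norm_sub_rev]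

/-- Key inequality for the dual error bound. For any `y` and any dual
optimal `y*`, with `(x¹(y), x²(y))` minimizing the augmented Lagrangian at `y`
and `(x¹(y*), x²(y*))` at `y*` (where `x¹(y*) = x²(y*)`),
`‖Mx²(y) - Mx²(y*)‖² + ρ‖Ex(y) - Ex(y*)‖² ≤ ‖y - y*‖ ‖∇g_ρ(y)‖`,
with `Ex = x¹ - x²` and `∇g_ρ(y) = x¹(y) - x²(y)`. -/
theorem dual_error_bound_key_inequality
    (n d : ℕ) (G : Type) [Fintype G] (lam ρ : ℝ) (hlam : 0 < lam) (hρ : 0 < ρ)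
    (w : G → ℝ) (hw : ∀ g, 0 < w g) (j : G → Finset (Fin n))
    (hdisj : ∀ g g', g ≠ g' → Disjoint (j g) (j g'))
    (M : Matrix (Fin d) (Fin n) ℝ) (b : EuclideanSpace ℝ (Fin d))
    (x1 x2 : EuclideanSpace ℝ (Fin n) → EuclideanSpace ℝ (Fin n)) :
    let L : EuclideanSpace ℝ (Fin n) → EuclideanSpace ℝ (Fin n) →
        EuclideanSpace ℝ (Fin n) → ℝ := fun u1 u2 y =>
      lam * ∑ g, w g * Real.sqrt (∑ t ∈ j g, u1 t ^ 2) +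
        (1 / 2) * ‖Matrix.toEuclideanLin M u2 - b‖ ^ 2 + ⟪y, u1 - u2⟫_ℝ +
        (ρ / 2) * ‖u1 - u2‖ ^ 2
    let gdual : EuclideanSpace ℝ (Fin n) → ℝ := fun y => L (x1 y) (x2 y) y
    (∀ y u1 u2, L (x1 y) (x2 y) y ≤ L u1 u2 y) →
      ∀ y ystar, (∀ y', gdual y' ≤ gdual ystar) → x1 ystar = x2 ystar →
        ‖Matrix.toEuclideanLin M (x2 y) - Matrix.toEuclideanLin M (x2 ystar)‖ ^ 2 +
            ρ * ‖(x1 y - x2 y) - (x1 ystar - x2 ystar)‖ ^ 2 ≤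
          ‖y - ystar‖ * ‖x1 y - x2 y‖ :=
  dual_error_bound_key_inequality_general n d G lam ρ hlam w hw j M b x1 x2
end

section
/- One-step descent inequality for ADMM: with the notation ỹ^k = y^k - y*, x̃^{i,k} = x^{i,k} - x^{i,*} (i=1,2), the ADMM iterates satisfy ‖ỹ^{k+1}‖² - ‖ỹ^k‖² = α²‖x̃^{1,k+1} - x̃^{2,k+1}‖² + 2α⟨x̃^{1,k+1} - x̃^{2,k+1}, ỹ^k⟩, and moreover ⟨x̃^{1,k+1} - x̃^{2,k+1}, ỹ^k⟩ ≤ ρ⟨x̃^{2,k} - x̃^{2,k+1}, x̃^{1,k+1}⟩ - ‖Mx̃^{2,k+1}‖² - ρ‖x̃^{2,k+1} - x̃^{1,k+1}‖². -/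
open scoped InnerProductSpace

/-- One-step descent identity/inequality for ADMM. With
`ỹ^k = y^k - y*`, `x̃^{i,k} = x^{i,k} - x^{i,*}` and the variational inequalities
(9)-(10) and the dual update, one has
`‖ỹ^{k+1}‖² - ‖ỹ^k‖² = α²‖x̃^{1,k+1} - x̃^{2,k+1}‖² + 2α⟨x̃^{1,k+1} - x̃^{2,k+1}, ỹ^k⟩`
and `⟨x̃^{1,k+1} - x̃^{2,k+1}, ỹ^k⟩ ≤ ρ⟨x̃^{2,k} - x̃^{2,k+1}, x̃^{1,k+1}⟩
- ‖Mx̃^{2,k+1}‖² - ρ‖x̃^{2,k+1} - x̃^{1,k+1}‖²`. -/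
theorem admm_one_step_descent
    (n d : ℕ) (ρ α : ℝ) (hρ : 0 < ρ) (hα : 0 < α)
    (M : Matrix (Fin d) (Fin n) ℝ)
    (x1k1 x2k x2k1 yk yk1 x1star x2star ystar : EuclideanSpace ℝ (Fin n))
    (hxeq : x1star = x2star)
    -- variational inequality (9)
    (h9 : 0 ≤ ⟪-(yk - ystar) + ρ • ((x2k - x2star) - (x1k1 - x1star)),
      x1k1 - x1star⟫_ℝ)
    -- variational inequality (10)
    (h10 : 0 ≤ ⟪Matrix.toEuclideanLin M.transpose
        (Matrix.toEuclideanLin M (x2k1 - x2star)) - (yk - ystar) -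
        ρ • ((x1k1 - x1star) - (x2k1 - x2star)), -(x2k1 - x2star)⟫_ℝ)
    -- dual update
    (hdual : yk1 = yk + α • (x1k1 - x2k1)) :
    (‖yk1 - ystar‖ ^ 2 - ‖yk - ystar‖ ^ 2 =
      α ^ 2 * ‖(x1k1 - x1star) - (x2k1 - x2star)‖ ^ 2 +
        2 * α * ⟪(x1k1 - x1star) - (x2k1 - x2star), yk - ystar⟫_ℝ) ∧
      ⟪(x1k1 - x1star) - (x2k1 - x2star), yk - ystar⟫_ℝ ≤
        ρ * ⟪(x2k - x2star) - (x2k1 - x2star), x1k1 - x1star⟫_ℝ -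
          ‖Matrix.toEuclideanLin M (x2k1 - x2star)‖ ^ 2 -
          ρ * ‖(x2k1 - x2star) - (x1k1 - x1star)‖ ^ 2 := by
  set a := x1k1 - x1star with ha
  set b := x2k1 - x2star with hb
  set c := x2k - x2star with hc
  set y := yk - ystar with hy
  have hab : x1k1 - x2k1 = a - b := by rw [ha, hb, hxeq]; abel
  have htr : M.transpose = M.conjTranspose := by
    ext i j; simp [Matrix.conjTranspose_apply]
  have hM : ⟪Matrix.toEuclideanLin M.transpose (Matrix.toEuclideanLin M b), b⟫_ℝ
      = ‖Matrix.toEuclideanLin M b‖ ^ 2 := by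
    rw [htr, Matrix.toEuclideanLin_conjTranspose_eq_adjoint,
      LinearMap.adjoint_inner_left, real_inner_self_eq_norm_sq]
  constructor
  · have h1 : yk1 - ystar = y + α • (a - b) := by
      rw [hdual, hab, hy]; abel_nf
    rw [h1, norm_add_sq_real, norm_smul, real_inner_smul_right,
      real_inner_comm y (a - b)]
    simp [abs_of_pos hα]
    ring
  · have e9 : ⟪y, a⟫_ℝ ≤ ρ * ⟪c - a, a⟫_ℝ := by
      rw [inner_add_left, inner_neg_left, real_inner_smul_left] at h9
      linarith
    have e10 : ‖Matrix.toEuclideanLin M b‖ ^ 2 ≤ ⟪y, b⟫_ℝ + ρ * ⟪a - b, b⟫_ℝ := by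
      rw [inner_neg_right, inner_sub_left, inner_sub_left,
        real_inner_smul_left, hM] at h10
      linarith
    have expand : ⟪a - b, y⟫_ℝ = ⟪y, a⟫_ℝ - ⟪y, b⟫_ℝ := by
      rw [inner_sub_left, real_inner_comm a y, real_inner_comm b y]
    have key : ⟪c - a, a⟫_ℝ + ⟪a - b, b⟫_ℝ
        = ⟪c - b, a⟫_ℝ - ‖b - a‖ ^ 2 := by
      rw [← real_inner_self_eq_norm_sq]
      simp only [inner_sub_left, inner_sub_right]
      rw [real_inner_comm b a]
      ring
    have hnorm : ‖b - a‖ ^ 2 = ‖a - b‖ ^ 2 := by rw [← norm_neg]; congr 1; abel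
    rw [expand]
    nlinarith [e9, e10, key, hnorm]
end

section
/- Reduction of the primal error bound to block x²: suppose there exist τ' < ∞ and δ > 0 such that dist(x², X²(y)) ≤ τ'‖∇̃_x L_ρ(x¹,x²;y)‖ whenever ‖∇̃_x L_ρ(x¹,x²;y)‖ ≤ δ. Then there exists τ < ∞ such that dist((x¹,x²), X(y)) ≤ τ‖∇̃_x L_ρ(x¹,x²;y)‖ on the same region, using the identity x¹ - x¹* = ((1/ρ)MᵀM + I)(x² - x²*) - (1/ρ)∇̃_{x²}L_ρ(x¹,x²;y) for the minimizer (x¹*, x²*) with dist(x², x²*) = dist(x², X²(y)). -/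
open scoped InnerProductSpace InnerProduct

/-!
The part of `L_ρ` depending on `x²` is quadratic in `x²`, so every minimizer `p` is stationary
in `x²`: `r²(p) = 0`. As `r²` is affine, subtracting gives
`ρ (x¹ - p¹) = (ρ + MᵀM)(x² - p²) - r²(x)`, so in the max distance of `E × E`
`dist((x¹, x²), p) ≤ (1 + ‖M‖²/ρ) ‖x² - p²‖ + ‖r²(x)‖/ρ`.
Taking the infimum over `p` turns the error bound for `x²` into one for `(x¹, x²)`, with
`τ = (1 + ‖M‖²/ρ) τ' + 1/ρ`.
-/

theorem Metric.le_mul_infDist_add {α : Type*} [PseudoMetricSpace α] {s : Set α} {x : α}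
    {u C c : ℝ} (hs : s.Nonempty) (hC : 0 < C) (h : ∀ z ∈ s, u ≤ C * dist x z + c) :
    u ≤ C * infDist x s + c := by
  have : (u - c) / C ≤ infDist x s :=
    (le_infDist hs).2 fun z hz => (div_le_iff₀' hC).2 (by linarith [h z hz])
  linarith [(div_le_iff₀' hC).1 this]

theorem eq_zero_of_forall_nonneg_quadratic {a c : ℝ} (h : ∀ t : ℝ, 0 ≤ a * t ^ 2 + c * t) :
    c = 0 := by
  have := discrim_le_zero (K := ℝ) (c := 0) fun t => by simpa [sq] using h t
  rw [discrim] at this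
  nlinarith [sq_nonneg c]

noncomputable section

namespace AugmentedLagrangian

variable {E F : Type*} [NormedAddCommGroup E] [InnerProductSpace ℝ E] [CompleteSpace E]
  [NormedAddCommGroup F] [InnerProductSpace ℝ F] [CompleteSpace F]
  (T : E →L[ℝ] F) (b : F) (ρ : ℝ)

/-- `L_ρ` minus `h x₁`: the only part of the augmented Lagrangian that depends on `x₂`. -/
def smoothPart (x₁ x₂ y : E) : ℝ :=
  (1 / 2) * ‖T x₂ - b‖ ^ 2 + ⟪y, x₁ - x₂⟫_ℝ + (ρ / 2) * ‖x₁ - x₂‖ ^ 2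

/-- The gradient of `smoothPart` in `x₂`, i.e. the residual `r²`. -/
def gradSnd (x₁ x₂ y : E) : E :=
  (T†) (T x₂ - b) - y + ρ • (x₂ - x₁)

theorem smoothPart_add_smul (x₁ x₂ y v : E) (t : ℝ) :
    smoothPart T b ρ x₁ (x₂ + t • v) y = smoothPart T b ρ x₁ x₂ y +
      ((1 / 2) * ‖T v‖ ^ 2 + (ρ / 2) * ‖v‖ ^ 2) * t ^ 2 + ⟪gradSnd T b ρ x₁ x₂ y, v⟫_ℝ * t := by
  have hT : T (x₂ + t • v) - b = (T x₂ - b) + t • T v := by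
    rw [map_add, map_smul]; abel
  have hx : x₁ - (x₂ + t • v) = (x₁ - x₂) + (-t) • v := by
    rw [neg_smul]; abel
  simp only [smoothPart, gradSnd]
  rw [hT, hx, norm_add_sq_real, norm_add_sq_real]
  simp only [inner_add_left, inner_add_right, inner_sub_left, inner_sub_right, real_inner_smul_left,
    real_inner_smul_right, ContinuousLinearMap.adjoint_inner_left, norm_smul, Real.norm_eq_abs,
    mul_pow, sq_abs]
  ring

theorem gradSnd_eq_zero_of_forall_le {x₁ x₂ y : E}
    (hmin : ∀ z, smoothPart T b ρ x₁ x₂ y ≤ smoothPart T b ρ x₁ z y) :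
    gradSnd T b ρ x₁ x₂ y = 0 := by
  set g := gradSnd T b ρ x₁ x₂ y
  have : ⟪g, g⟫_ℝ = 0 :=
    eq_zero_of_forall_nonneg_quadratic (a := (1 / 2) * ‖T g‖ ^ 2 + (ρ / 2) * ‖g‖ ^ 2) fun t => by
      linarith [hmin (x₂ + t • g), smoothPart_add_smul T b ρ x₁ x₂ y g t]
  exact inner_self_eq_zero.mp this

theorem gradSnd_sub (x₁ x₂ p₁ p₂ y : E) :
    gradSnd T b ρ x₁ x₂ y - gradSnd T b ρ p₁ p₂ y =
      (T† ∘L T) (x₂ - p₂) + ρ • (x₂ - p₂) - ρ • (x₁ - p₁) := by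
  simp only [gradSnd, ContinuousLinearMap.comp_apply, map_sub, smul_sub]
  abel

theorem norm_fst_sub_le (hρ : 0 < ρ) {x₁ x₂ p₁ p₂ y : E} (hp : gradSnd T b ρ p₁ p₂ y = 0) :
    ‖x₁ - p₁‖ ≤ (1 + ‖T‖ ^ 2 / ρ) * ‖x₂ - p₂‖ + ‖gradSnd T b ρ x₁ x₂ y‖ / ρ := by
  have hid : ρ • (x₁ - p₁) = (T† ∘L T) (x₂ - p₂) + ρ • (x₂ - p₂) - gradSnd T b ρ x₁ x₂ y := by
    rw [← sub_zero (gradSnd T b ρ x₁ x₂ y), ← hp, gradSnd_sub]; abel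
  have hAT : ‖(T† ∘L T) (x₂ - p₂)‖ ≤ ‖T‖ ^ 2 * ‖x₂ - p₂‖ := by
    simpa [ContinuousLinearMap.norm_adjoint_comp_self, sq] using (T† ∘L T).le_opNorm (x₂ - p₂)
  have hρx : ρ * ‖x₁ - p₁‖ ≤ ‖T‖ ^ 2 * ‖x₂ - p₂‖ + ρ * ‖x₂ - p₂‖ + ‖gradSnd T b ρ x₁ x₂ y‖ := by
    calc ρ * ‖x₁ - p₁‖ = ‖ρ • (x₁ - p₁)‖ := by rw [norm_smul, Real.norm_of_nonneg hρ.le]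
      _ ≤ ‖(T† ∘L T) (x₂ - p₂)‖ + ‖ρ • (x₂ - p₂)‖ + ‖gradSnd T b ρ x₁ x₂ y‖ := by
        rw [hid]; exact (norm_sub_le _ _).trans (by gcongr; exact norm_add_le _ _)
      _ ≤ _ := by rw [norm_smul, Real.norm_of_nonneg hρ.le]; gcongr
  rw [← mul_le_mul_iff_of_pos_left hρ]
  calc ρ * ‖x₁ - p₁‖ ≤ _ := hρx
    _ = _ := by field_simp; ring

theorem dist_le_of_gradSnd_eq_zero (hρ : 0 < ρ) {x p : E × E} {y : E}
    (hp : gradSnd T b ρ p.1 p.2 y = 0) :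
    dist x p ≤ (1 + ‖T‖ ^ 2 / ρ) * dist x.2 p.2 + ‖gradSnd T b ρ x.1 x.2 y‖ / ρ := by
  rw [Prod.dist_eq, dist_eq_norm, dist_eq_norm]
  refine max_le (norm_fst_sub_le T b ρ hρ hp) ?_
  have : ‖x.2 - p.2‖ ≤ (1 + ‖T‖ ^ 2 / ρ) * ‖x.2 - p.2‖ :=
    le_mul_of_one_le_left (norm_nonneg _) (by simp only [le_add_iff_nonneg_right]; positivity)
  have : 0 ≤ ‖gradSnd T b ρ x.1 x.2 y‖ / ρ := by positivity
  linarith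

end AugmentedLagrangian

end

open AugmentedLagrangian in
theorem primal_error_bound_reduction_general
    (n d : ℕ) (ρ : ℝ) (hρ : 0 < ρ)
    (M : Matrix (Fin d) (Fin n) ℝ) (b : EuclideanSpace ℝ (Fin d))
    (h : EuclideanSpace ℝ (Fin n) → ℝ)
    (P : EuclideanSpace ℝ (Fin n) → EuclideanSpace ℝ (Fin n)) :
    let E := EuclideanSpace ℝ (Fin n)
    let L : E → E → E → ℝ := fun x1 x2 y =>
      h x1 + (1 / 2) * ‖Matrix.toEuclideanLin M x2 - b‖ ^ 2 + ⟪y, x1 - x2⟫_ℝ +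
        (ρ / 2) * ‖x1 - x2‖ ^ 2
    let X : E → Set (E × E) := fun y => {p | ∀ q : E × E, L p.1 p.2 y ≤ L q.1 q.2 y}
    let X2 : E → Set E := fun y => Prod.snd '' X y
    let r1 : E → E → E → E := fun x1 x2 y => x1 - P (x1 - y - ρ • (x1 - x2))
    let r2 : E → E → E → E := fun x1 x2 y =>
      Matrix.toEuclideanLin M.transpose (Matrix.toEuclideanLin M x2 - b) - y +
        ρ • (x2 - x1)
    let R : E → E → E → ℝ := fun x1 x2 y =>
      Real.sqrt (‖r1 x1 x2 y‖ ^ 2 + ‖r2 x1 x2 y‖ ^ 2)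
    (∀ y, (X y).Nonempty) →
    ∀ τ' δ : ℝ, 0 ≤ τ' → 0 < δ →
      (∀ x1 x2 y, R x1 x2 y ≤ δ → Metric.infDist x2 (X2 y) ≤ τ' * R x1 x2 y) →
      ∃ τ : ℝ, 0 ≤ τ ∧
        ∀ x1 x2 y, R x1 x2 y ≤ δ →
          Metric.infDist (x1, x2) (X y) ≤ τ * R x1 x2 y := by
  intro E L X X2 r1 r2 R hne τ' δ hτ' _ hbound
  set T := (Matrix.toEuclideanLin M).toContinuousLinearMap
  have hr2 : ∀ x1 x2 y, r2 x1 x2 y = gradSnd T b ρ x1 x2 y := fun x1 x2 y => by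
    rw [gradSnd, ← LinearMap.adjoint_toContinuousLinearMap,
      ← Matrix.toEuclideanLin_conjTranspose_eq_adjoint,
      Matrix.conjTranspose_eq_transpose_of_trivial]
    rfl
  have hL : ∀ x1 x2 y, L x1 x2 y = h x1 + smoothPart T b ρ x1 x2 y := fun x1 x2 y => by
    simp only [L, smoothPart, add_assoc]; rfl
  have hstat : ∀ y, ∀ p ∈ X y, gradSnd T b ρ p.1 p.2 y = 0 := fun y p hp =>
    gradSnd_eq_zero_of_forall_le T b ρ fun z => by simpa [hL] using hp (p.1, z)
  refine ⟨(1 + ‖T‖ ^ 2 / ρ) * τ' + 1 / ρ, by positivity, fun x1 x2 y hR => ?_⟩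
  have hr2R : ‖r2 x1 x2 y‖ ≤ R x1 x2 y :=
    Real.le_sqrt_of_sq_le (le_add_of_nonneg_left (sq_nonneg _))
  have hdist : Metric.infDist (x1, x2) (X y) ≤
      (1 + ‖T‖ ^ 2 / ρ) * Metric.infDist x2 (X2 y) + ‖r2 x1 x2 y‖ / ρ :=
    Metric.le_mul_infDist_add ((hne y).image _) (by positivity) <| Set.forall_mem_image.2
      fun p hp => (Metric.infDist_le_dist_of_mem hp).trans <| by
        rw [hr2]; exact dist_le_of_gradSnd_eq_zero T b ρ hρ (hstat y p hp)
  calc Metric.infDist (x1, x2) (X y)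
      ≤ (1 + ‖T‖ ^ 2 / ρ) * (τ' * R x1 x2 y) + R x1 x2 y / ρ := by
        grw [hdist, hbound x1 x2 y hR, hr2R]
    _ = ((1 + ‖T‖ ^ 2 / ρ) * τ' + 1 / ρ) * R x1 x2 y := by ring

/-- Reduction of the primal error bound to block `x²`. If there are
`τ' < ∞` and `δ > 0` with `dist(x², X²(y)) ≤ τ'‖∇̃_x L_ρ(x¹,x²;y)‖` whenever
`‖∇̃_x L_ρ(x¹,x²;y)‖ ≤ δ`, then there is `τ < ∞` with
`dist((x¹,x²), X(y)) ≤ τ‖∇̃_x L_ρ(x¹,x²;y)‖` on the same region. -/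
theorem primal_error_bound_reduction
    (n d : ℕ) (ρ : ℝ) (hρ : 0 < ρ)
    (M : Matrix (Fin d) (Fin n) ℝ) (b : EuclideanSpace ℝ (Fin d))
    (h : EuclideanSpace ℝ (Fin n) → ℝ) (hconv : ConvexOn ℝ Set.univ h)
    (P : EuclideanSpace ℝ (Fin n) → EuclideanSpace ℝ (Fin n))
    (hP : ∀ z u, h (P z) + (1 / 2) * ‖P z - z‖ ^ 2 ≤ h u + (1 / 2) * ‖u - z‖ ^ 2) :
    let E := EuclideanSpace ℝ (Fin n)
    let L : E → E → E → ℝ := fun x1 x2 y =>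
      h x1 + (1 / 2) * ‖Matrix.toEuclideanLin M x2 - b‖ ^ 2 + ⟪y, x1 - x2⟫_ℝ +
        (ρ / 2) * ‖x1 - x2‖ ^ 2
    let X : E → Set (E × E) := fun y => {p | ∀ q : E × E, L p.1 p.2 y ≤ L q.1 q.2 y}
    let X2 : E → Set E := fun y => Prod.snd '' X y
    let r1 : E → E → E → E := fun x1 x2 y => x1 - P (x1 - y - ρ • (x1 - x2))
    let r2 : E → E → E → E := fun x1 x2 y =>
      Matrix.toEuclideanLin M.transpose (Matrix.toEuclideanLin M x2 - b) - y +
        ρ • (x2 - x1)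
    let R : E → E → E → ℝ := fun x1 x2 y =>
      Real.sqrt (‖r1 x1 x2 y‖ ^ 2 + ‖r2 x1 x2 y‖ ^ 2)
    (∀ y, (X y).Nonempty) →
    ∀ τ' δ : ℝ, 0 ≤ τ' → 0 < δ →
      (∀ x1 x2 y, R x1 x2 y ≤ δ → Metric.infDist x2 (X2 y) ≤ τ' * R x1 x2 y) →
      ∃ τ : ℝ, 0 ≤ τ ∧
        ∀ x1 x2 y, R x1 x2 y ≤ δ →
          Metric.infDist (x1, x2) (X y) ≤ τ * R x1 x2 y :=
  primal_error_bound_reduction_general n d ρ hρ M b h P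
end

section
/- In the ADMM scheme, combining consecutive x²-optimality conditions yields: ⟨y^k - y^{k-1}, x^{2,k+1} - x^{2,k}⟩ - ρ‖x^{2,k+1} - x^{2,k}‖² + ρ⟨x^{1,k+1} - x^{1,k}, x^{2,k+1} - x^{2,k}⟩ ≥ ‖M(x^{2,k+1} - x^{2,k})‖² ≥ 0; consequently, since y^k - y^{k-1} = α(x^{1,k} - x^{2,k}), one gets ρ⟨x^{1,k+1} - x^{1,k}, x^{2,k+1} - x^{2,k}⟩ ≥ ρ‖x^{2,k+1} - x^{2,k}‖² - α⟨x^{1,k} - x^{2,k}, x^{2,k+1} - x^{2,k}⟩. -/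
open scoped InnerProductSpace

/-- Combining consecutive `x²`-optimality conditions of ADMM yields
`⟨y^k - y^{k-1}, x^{2,k+1} - x^{2,k}⟩ - ρ‖x^{2,k+1} - x^{2,k}‖²
  + ρ⟨x^{1,k+1} - x^{1,k}, x^{2,k+1} - x^{2,k}⟩ ≥ ‖M(x^{2,k+1} - x^{2,k})‖² ≥ 0`;
consequently, with `y^k - y^{k-1} = α(x^{1,k} - x^{2,k})`,
`ρ⟨x^{1,k+1} - x^{1,k}, x^{2,k+1} - x^{2,k}⟩ ≥ ρ‖x^{2,k+1} - x^{2,k}‖²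
  - α⟨x^{1,k} - x^{2,k}, x^{2,k+1} - x^{2,k}⟩`. -/
theorem admm_consecutive_x2_optimality
    (n d : ℕ) (ρ α : ℝ) (hρ : 0 < ρ) (hα : 0 < α)
    (M : Matrix (Fin d) (Fin n) ℝ) (b : EuclideanSpace ℝ (Fin d))
    (x1k x1k1 x2k x2k1 yk ykm1 : EuclideanSpace ℝ (Fin n))
    -- x²-update variational inequality at step k+1
    (hVI1 : ∀ z, 0 ≤ ⟪Matrix.toEuclideanLin M.transpose
        (Matrix.toEuclideanLin M x2k1 - b) + ρ • (x2k1 - x1k1) - yk, z - x2k1⟫_ℝ)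
    -- x²-update variational inequality at step k
    (hVI0 : ∀ z, 0 ≤ ⟪Matrix.toEuclideanLin M.transpose
        (Matrix.toEuclideanLin M x2k - b) + ρ • (x2k - x1k) - ykm1, z - x2k⟫_ℝ)
    -- dual update
    (hdual : yk = ykm1 + α • (x1k - x2k)) :
    (‖Matrix.toEuclideanLin M (x2k1 - x2k)‖ ^ 2 ≤
        ⟪yk - ykm1, x2k1 - x2k⟫_ℝ - ρ * ‖x2k1 - x2k‖ ^ 2 +
          ρ * ⟪x1k1 - x1k, x2k1 - x2k⟫_ℝ) ∧
      ρ * ‖x2k1 - x2k‖ ^ 2 - α * ⟪x1k - x2k, x2k1 - x2k⟫_ℝ ≤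
        ρ * ⟪x1k1 - x1k, x2k1 - x2k⟫_ℝ := by
  set u := x2k1 - x2k with hu
  have hadj : ∀ v : EuclideanSpace ℝ (Fin n),
      ⟪Matrix.toEuclideanLin M.transpose (Matrix.toEuclideanLin M v), u⟫_ℝ
        = ⟪Matrix.toEuclideanLin M v, Matrix.toEuclideanLin M u⟫_ℝ := by
    intro v
    rw [← Matrix.conjTranspose_eq_transpose_of_trivial,
      Matrix.toEuclideanLin_conjTranspose_eq_adjoint, LinearMap.adjoint_inner_left]
  have h1 := hVI1 x2k
  have h0 := hVI0 x2k1
  have hx : x2k - x2k1 = -u := (neg_sub x2k1 x2k).symm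
  have expand : ∀ (w : EuclideanSpace ℝ (Fin d)) (a c y : EuclideanSpace ℝ (Fin n)),
      ⟪Matrix.toEuclideanLin M.transpose (Matrix.toEuclideanLin M a - w) + ρ • (a - c) - y, u⟫_ℝ
        = ⟪Matrix.toEuclideanLin M.transpose (Matrix.toEuclideanLin M a), u⟫_ℝ
          - ⟪Matrix.toEuclideanLin M.transpose w, u⟫_ℝ
          + ρ * ⟪a, u⟫_ℝ - ρ * ⟪c, u⟫_ℝ - ⟪y, u⟫_ℝ := by
    intro w a c y
    rw [map_sub, inner_sub_left, inner_add_left, inner_sub_left, real_inner_smul_left,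
      inner_sub_left]
    ring
  have e1 : ⟪Matrix.toEuclideanLin M.transpose (Matrix.toEuclideanLin M x2k1), u⟫_ℝ
      - ⟪Matrix.toEuclideanLin M.transpose b, u⟫_ℝ
      + ρ * ⟪x2k1, u⟫_ℝ - ρ * ⟪x1k1, u⟫_ℝ - ⟪yk, u⟫_ℝ ≤ 0 := by
    rw [hx, inner_neg_right, expand] at h1
    linarith
  have e0 : 0 ≤ ⟪Matrix.toEuclideanLin M.transpose (Matrix.toEuclideanLin M x2k), u⟫_ℝ
      - ⟪Matrix.toEuclideanLin M.transpose b, u⟫_ℝ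
      + ρ * ⟪x2k, u⟫_ℝ - ρ * ⟪x1k, u⟫_ℝ - ⟪ykm1, u⟫_ℝ := by
    rw [← hu, expand] at h0
    linarith
  have hMu : ⟪Matrix.toEuclideanLin M.transpose (Matrix.toEuclideanLin M x2k1), u⟫_ℝ
      - ⟪Matrix.toEuclideanLin M.transpose (Matrix.toEuclideanLin M x2k), u⟫_ℝ
      = ‖Matrix.toEuclideanLin M u‖ ^ 2 := by
    rw [hadj, hadj, ← inner_sub_left, ← map_sub, ← hu, real_inner_self_eq_norm_sq]
  have hnu : ⟪x2k1, u⟫_ℝ - ⟪x2k, u⟫_ℝ = ‖u‖ ^ 2 := by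
    rw [← inner_sub_left, ← hu, real_inner_self_eq_norm_sq]
  have hy : ⟪yk - ykm1, u⟫_ℝ = ⟪yk, u⟫_ℝ - ⟪ykm1, u⟫_ℝ := inner_sub_left _ _ _
  have hx1 : ⟪x1k1 - x1k, u⟫_ℝ = ⟪x1k1, u⟫_ℝ - ⟪x1k, u⟫_ℝ := inner_sub_left _ _ _
  have key : ‖Matrix.toEuclideanLin M u‖ ^ 2 ≤
      ⟪yk - ykm1, u⟫_ℝ - ρ * ‖u‖ ^ 2 + ρ * ⟪x1k1 - x1k, u⟫_ℝ := by
    rw [hy, hx1]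
    nlinarith [e1, e0, hMu, hnu]
  refine ⟨key, ?_⟩
  have hyd : ⟪yk - ykm1, u⟫_ℝ = α * ⟪x1k - x2k, u⟫_ℝ := by
    rw [hdual, add_sub_cancel_left, real_inner_smul_left]
  nlinarith [key, sq_nonneg ‖Matrix.toEuclideanLin M u‖]
end
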